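/- arXiv:2410.14240 — 3 statements merged into one kernel-verified Lean document; each statement's English description precedes it below -/
import Mathlib

section
/- Let F be an AL-RNN with the property that for every sign pattern s the matrix A + W·D_s, viewed as a complex matrix, has no eigenvalue of absolute value 1 (hyperbolicity), and assume moreover that every fixed point of F has all of its last P coordinates nonzero. Let z_n = F^n(z_0) be an orbit that is bounded and satisfies z_n ∈ ⋃_s U_s for all n, with symbolic sequence a_n. Then the orbit is asymptotically fixed (i.e., there exists z* with F(z*) = z* and z_n → z*) if and only if the symbolic sequence is eventually constant, i.e., there exist N and a sign pattern s* with a_n = s* for all n ≥ N. -/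
open Matrix Filter Topology

/-- `Φ*`: identity on the first `M − P` coordinates, ReLU on the last `P` coordinates. -/
noncomputable def phiStar (M P : ℕ) (z : Fin M → ℝ) : Fin M → ℝ :=
  fun j => if (j : ℕ) < M - P then z j else max 0 (z j)

/-- The AL-RNN map `F(z) = A z + W Φ*(z) + h`. -/
noncomputable def alrnn (M P : ℕ) (A W : Matrix (Fin M) (Fin M) ℝ) (h : Fin M → ℝ)
    (z : Fin M → ℝ) : Fin M → ℝ :=
  A.mulVec z + W.mulVec (phiStar M P z) + h

/-- The diagonal matrix `D_s` attached to a sign pattern `s : Fin P → Fin 2`: its first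
`M − P` diagonal entries are `1` and the `(M − P + i)`-th diagonal entry is `s i`. -/
noncomputable def signDiag (M P : ℕ) (s : Fin P → Fin 2) : Matrix (Fin M) (Fin M) ℝ :=
  Matrix.diagonal fun j =>
    if (j : ℕ) < M - P then 1
    else if hj : (j : ℕ) - (M - P) < P then ((s ⟨(j : ℕ) - (M - P), hj⟩ : ℕ) : ℝ) else 0

/-- The open linear subregion `U_s`: the `(M − P + i)`-th coordinate is `> 0` if
`s i = 1` and `< 0` if `s i = 0`. -/
def regionOpen (M P : ℕ) (hPM : P ≤ M) (s : Fin P → Fin 2) : Set (Fin M → ℝ) :=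
  { z | ∀ i : Fin P,
      if s i = 1 then 0 < z ⟨M - P + (i : ℕ), by omega⟩
      else z ⟨M - P + (i : ℕ), by omega⟩ < 0 }

/-- The closed linear subregion: the sign conditions of `s` hold non-strictly. -/
def regionClosed (M P : ℕ) (hPM : P ≤ M) (s : Fin P → Fin 2) : Set (Fin M → ℝ) :=
  { z | ∀ i : Fin P,
      if s i = 1 then 0 ≤ z ⟨M - P + (i : ℕ), by omega⟩
      else z ⟨M - P + (i : ℕ), by omega⟩ ≤ 0 }


/-!
Once the symbolic sequence is constant, the orbit follows the affine map `z ↦ B z + h` with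
`B = A + W D_s`. Hyperbolicity makes `1 - B` invertible, so this map has a fixed point `p`, and
`z_n - p` is a bounded orbit of the linear map `B`. Complexifying and splitting into generalized
eigenspaces, a bounded orbit only sees eigenvalues of modulus `≤ 1`, hence `< 1`, so it tends to
`0`; thus `z_n → p`, and `p` is fixed by continuity of `F`. Conversely, a fixed point with nonzero
switching coordinates lies in an open region `U_s`, which the orbit eventually enters and, the
regions being disjoint, never leaves.
-/

namespace Module.End

theorem tendsto_pow_apply_of_mem_maxGenEigenspace {𝕜 V : Type*} [NormedField 𝕜] [CompleteSpace 𝕜]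
    [NormedAddCommGroup V] [NormedSpace 𝕜 V] (T : End 𝕜 V) {μ : 𝕜} (hμ : ‖μ‖ < 1) {x : V}
    (hx : x ∈ T.maxGenEigenspace μ) : Tendsto (fun n => (T ^ n) x) atTop (𝓝 0) := by
  obtain ⟨m, hm⟩ := (T.mem_maxGenEigenspace μ x).mp hx
  set N := T - μ • 1
  have hNx : ∀ k ≥ m, (N ^ k) x = 0 := fun k hk => by
    rw [← Nat.sub_add_cancel hk, pow_add, mul_apply, hm, map_zero]
  have hexpand : ∀ n ≥ m,
      (T ^ n) x = ∑ k ∈ Finset.range m, (n.choose k * μ ^ (n - k)) • (N ^ k) x := by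
    intro n hn
    have hcomm : Commute N (μ • 1) := (Commute.one_right N).smul_right μ
    have hbinom : ∀ k, (N ^ k * (μ • 1) ^ (n - k) * (n.choose k : End 𝕜 V)) x =
        (n.choose k * μ ^ (n - k)) • (N ^ k) x := fun k => by
      simp only [smul_pow, one_pow, mul_apply, LinearMap.smul_apply, one_apply,
        End.natCast_apply, map_smul, map_nsmul, mul_smul, Nat.cast_smul_eq_nsmul]
    rw [show T = N + μ • 1 by simp [N], hcomm.add_pow, LinearMap.sum_apply,
      Finset.sum_congr rfl fun k _ => hbinom k]
    refine (Finset.sum_subset (Finset.range_subset_range.mpr (by omega)) fun k _ hk => ?_).symm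
    rw [hNx k (by simpa using hk), smul_zero]
  have hterm : ∀ k, Tendsto (fun n => (n.choose k * μ ^ (n - k)) • (N ^ k) x) atTop (𝓝 0) := by
    intro k
    rw [← tendsto_add_atTop_iff_nat k]
    simpa using (summable_choose_mul_geometric_of_norm_lt_one k hμ).tendsto_atTop_zero.smul_const
      ((N ^ k) x)
  have hsum := tendsto_finsetSum (Finset.range m) fun k _ => hterm k
  rw [Finset.sum_const_zero] at hsum
  refine hsum.congr' ?_
  filter_upwards [eventually_ge_atTop m] with n hn using (hexpand n hn).symm

section BoundedOrbits

variable {𝕜 V : Type*} [NormedField 𝕜] [NormedAddCommGroup V] [NormedSpace 𝕜 V] (T : End 𝕜 V)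

def boundedOrbits : Submodule 𝕜 V where
  carrier := {x | ∃ C, ∀ n, ‖(T ^ n) x‖ ≤ C}
  add_mem' := by
    rintro x y ⟨C, hC⟩ ⟨D, hD⟩
    exact ⟨C + D, fun n =>
      (map_add (T ^ n) x y ▸ norm_add_le _ _).trans (add_le_add (hC n) (hD n))⟩
  zero_mem' := ⟨0, by simp⟩
  smul_mem' := by
    rintro c x ⟨C, hC⟩
    exact ⟨‖c‖ * C, fun n => by
      rw [map_smul, norm_smul]; exact mul_le_mul_of_nonneg_left (hC n) (norm_nonneg c)⟩

theorem mapsTo_boundedOrbits : ∀ x ∈ T.boundedOrbits, T x ∈ T.boundedOrbits := by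
  rintro x ⟨C, hC⟩
  exact ⟨C, fun n => by simpa [← mul_apply, ← pow_succ] using hC (n + 1)⟩

theorem norm_le_one_of_hasEigenvector_of_mem_boundedOrbits {μ : 𝕜} {x : V}
    (hx : T.HasEigenvector μ x) (hbdd : x ∈ T.boundedOrbits) : ‖μ‖ ≤ 1 := by
  obtain ⟨C, hC⟩ := hbdd
  have hpow : ∀ n, (T ^ n) x = μ ^ n • x := fun n => by
    induction n with
    | zero => simp
    | succ n ih =>
      rw [pow_succ', mul_apply, ih, map_smul, hx.apply_eq_smul, smul_smul, ← pow_succ]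
  by_contra! hμ
  obtain ⟨n, hn⟩ := pow_unbounded_of_one_lt (C / ‖x‖) hμ
  have hx0 : 0 < ‖x‖ := norm_pos_iff.mpr hx.2
  have := hC n
  rw [hpow, norm_smul, norm_pow, ← le_div_iff₀ hx0] at this
  linarith

theorem norm_lt_one_of_hasEigenvalue_restrict_boundedOrbits (hT : ∀ μ ∈ spectrum 𝕜 T, ‖μ‖ ≠ 1)
    {μ : 𝕜} (hμ : HasEigenvalue (T.restrict T.mapsTo_boundedOrbits) μ) : ‖μ‖ < 1 := by
  obtain ⟨x, hx⟩ := hμ.exists_hasEigenvector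
  have hTx : T.HasEigenvector μ x :=
    ⟨eigenspace_restrict_le_eigenspace T _ μ ⟨x, hx.1, rfl⟩, by simpa using hx.2⟩
  exact (T.norm_le_one_of_hasEigenvector_of_mem_boundedOrbits hTx x.2).lt_of_ne
    (hT μ (hasEigenvalue_of_hasEigenvector hTx).mem_spectrum)

end BoundedOrbits

theorem tendsto_pow_apply_of_mem_boundedOrbits {V : Type*} [NormedAddCommGroup V]
    [NormedSpace ℂ V] [FiniteDimensional ℂ V] (T : End ℂ V) (hT : ∀ μ ∈ spectrum ℂ T, ‖μ‖ ≠ 1)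
    {x : V} (hx : x ∈ T.boundedOrbits) : Tendsto (fun n => (T ^ n) x) atTop (𝓝 0) := by
  set S : End ℂ T.boundedOrbits := T.restrict T.mapsTo_boundedOrbits
  lift x to T.boundedOrbits using hx
  have hx : x ∈ ⨆ μ, S.maxGenEigenspace μ := by
    rw [iSup_maxGenEigenspace_eq_top]; trivial
  induction hx using Submodule.iSup_induction' with
  | mem μ y hy =>
    rcases eq_or_ne y 0 with rfl | hy0
    · simp
    have hμ : ‖μ‖ < 1 := T.norm_lt_one_of_hasEigenvalue_restrict_boundedOrbits hT
      (HasUnifEigenvalue.lt zero_lt_one (Submodule.ne_bot_iff _ |>.mpr ⟨y, hy, hy0⟩))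
    refine T.tendsto_pow_apply_of_mem_maxGenEigenspace hμ ?_
    rwa [maxGenEigenspace, genEigenspace_restrict] at hy
  | zero => simp
  | add y₁ y₂ _ _ h₁ h₂ => simpa using h₁.add h₂

end Module.End

namespace Matrix

variable {n : Type*} [Fintype n] [DecidableEq n]

theorem isUnit_map_iff {R S : Type*} [CommRing R] [CommRing S] (f : R →+* S) [IsLocalHom f]
    (B : Matrix n n R) : IsUnit (B.map f) ↔ IsUnit B := by
  rw [isUnit_iff_isUnit_det, isUnit_iff_isUnit_det, ← RingHom.mapMatrix_apply, ← RingHom.map_det,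
    _root_.isUnit_map_iff]

theorem tendsto_zero_of_isBounded_orbit (B : Matrix n n ℝ)
    (hB : ∀ μ ∈ spectrum ℂ (B.map Complex.ofReal), ‖μ‖ ≠ 1) {w : ℕ → n → ℝ}
    (hw : ∀ k, w (k + 1) = B *ᵥ w k) (hbdd : Bornology.IsBounded (Set.range w)) :
    Tendsto w atTop (𝓝 0) := by
  set T := toLin' (B.map Complex.ofReal)
  set wc : ℕ → n → ℂ := fun k => Complex.ofReal ∘ w k
  have hwc : ∀ k, wc k = (T ^ k) (wc 0) := fun k => by
    induction k with
    | zero => rfl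
    | succ k ih =>
      rw [pow_succ', Module.End.mul_apply, ← ih]
      funext i
      simp only [wc, T, hw, toLin'_apply, Function.comp_apply]
      exact RingHom.map_mulVec Complex.ofRealHom B (w k) i
  obtain ⟨C, hC⟩ := isBounded_iff_forall_norm_le.mp hbdd
  have hwc_norm : ∀ k, ‖wc k‖ ≤ C := fun k =>
    (pi_norm_le_iff_of_nonneg ((norm_nonneg _).trans (hC _ ⟨0, rfl⟩))).mpr fun i => by
      simpa [wc] using (norm_le_pi_norm (w k) i).trans (hC _ ⟨k, rfl⟩)
  have hT : ∀ μ ∈ spectrum ℂ T, ‖μ‖ ≠ 1 := by rwa [spectrum_toLin']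
  have hlim : Tendsto wc atTop (𝓝 0) := by
    rw [funext hwc]
    exact Module.End.tendsto_pow_apply_of_mem_boundedOrbits T hT ⟨C, fun k => hwc k ▸ hwc_norm k⟩
  have hre : Continuous fun v : n → ℂ => Complex.re ∘ v :=
    continuous_pi fun i => Complex.continuous_re.comp (continuous_apply i)
  simpa [wc, Function.comp_def, ← Pi.zero_def] using (hre.tendsto 0).comp hlim

theorem exists_tendsto_of_isBounded_affine_orbit (B : Matrix n n ℝ)
    (hB : ∀ μ ∈ spectrum ℂ (B.map Complex.ofReal), ‖μ‖ ≠ 1) (c : n → ℝ) {z : ℕ → n → ℝ}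
    (hz : ∀ k, z (k + 1) = B *ᵥ z k + c) (hbdd : Bornology.IsBounded (Set.range z)) :
    ∃ p, Tendsto z atTop (𝓝 p) := by
  have hunit : IsUnit (1 - B) := by
    have h1 : (1 : ℂ) ∉ spectrum ℂ (B.map Complex.ofReal) := fun h => hB 1 h (by simp)
    rw [spectrum.notMem_iff, map_one] at h1
    rwa [← isUnit_map_iff Complex.ofRealHom, Matrix.map_sub _ (by simp),
      Matrix.map_one _ (by simp) (by simp)]
  set p := (1 - B)⁻¹ *ᵥ c
  have hp : B *ᵥ p = p - c := by
    have : (1 - B) *ᵥ p = c := by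
      rw [mulVec_mulVec, mul_nonsing_inv _ ((isUnit_iff_isUnit_det _).mp hunit), one_mulVec]
    rw [sub_mulVec, one_mulVec] at this
    rw [← this]; abel
  have hlim := B.tendsto_zero_of_isBounded_orbit hB (w := fun k => z k - p) (fun k => by
    rw [hz, mulVec_sub, hp]; abel)
    ((hbdd.sub (Bornology.isBounded_singleton (x := p))).subset (by
      rintro _ ⟨k, rfl⟩; exact Set.sub_mem_sub ⟨k, rfl⟩ rfl))
  exact ⟨p, by simpa using hlim.add_const p⟩

end Matrix

section ALRNN

variable {M P : ℕ}

theorem phiStar_eq_signDiag_mulVec {hPM : P ≤ M} {s : Fin P → Fin 2} {z : Fin M → ℝ}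
    (hz : z ∈ regionOpen M P hPM s) : phiStar M P z = signDiag M P s *ᵥ z := by
  funext j
  rw [signDiag, mulVec_diagonal, phiStar]
  split_ifs with hj hj'
  · simp
  · set i : Fin P := ⟨j - (M - P), hj'⟩
    have hzi := hz i
    rw [show (⟨M - P + i, by omega⟩ : Fin M) = j by ext; simp [i]; omega] at hzi
    by_cases hsi : s i = 1
    · rw [if_pos hsi] at hzi
      simp [hsi, max_eq_right hzi.le]
    · rw [if_neg hsi] at hzi
      simp [show s i = 0 by omega, max_eq_left hzi.le]
  · omega

theorem alrnn_eq_of_mem_regionOpen (A W : Matrix (Fin M) (Fin M) ℝ) (h : Fin M → ℝ)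
    {hPM : P ≤ M} {s : Fin P → Fin 2} {z : Fin M → ℝ} (hz : z ∈ regionOpen M P hPM s) :
    alrnn M P A W h z = (A + W * signDiag M P s) *ᵥ z + h := by
  rw [alrnn, phiStar_eq_signDiag_mulVec hz, mulVec_mulVec, add_mulVec]

theorem continuous_phiStar : Continuous (phiStar M P) :=
  continuous_pi fun j => by
    unfold phiStar
    split_ifs
    · exact continuous_apply j
    · exact continuous_const.max (continuous_apply j)

theorem continuous_alrnn (A W : Matrix (Fin M) (Fin M) ℝ) (h : Fin M → ℝ) :
    Continuous (alrnn M P A W h) :=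
  ((continuous_const.matrix_mulVec continuous_id).add
    (continuous_const.matrix_mulVec continuous_phiStar)).add continuous_const

theorem isOpen_regionOpen (hPM : P ≤ M) (s : Fin P → Fin 2) : IsOpen (regionOpen M P hPM s) := by
  simp only [regionOpen, Set.ofPred_forall]
  refine isOpen_iInter_of_finite fun i => ?_
  split_ifs
  · exact isOpen_lt continuous_const (continuous_apply _)
  · exact isOpen_lt (continuous_apply _) continuous_const

theorem eq_of_mem_regionOpen {hPM : P ≤ M} {s t : Fin P → Fin 2} {z : Fin M → ℝ}
    (hs : z ∈ regionOpen M P hPM s) (ht : z ∈ regionOpen M P hPM t) : s = t := by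
  funext i
  have hsi := hs i
  have hti := ht i
  split_ifs at hsi hti <;> first | omega | linarith

theorem exists_mem_regionOpen (hPM : P ≤ M) {z : Fin M → ℝ}
    (hz : ∀ i : Fin P, z ⟨M - P + (i : ℕ), by omega⟩ ≠ 0) :
    ∃ s, z ∈ regionOpen M P hPM s :=
  ⟨fun i => if 0 < z ⟨M - P + (i : ℕ), by omega⟩ then 1 else 0, fun i => by
    by_cases hpos : 0 < z ⟨M - P + (i : ℕ), by omega⟩
    · simp [hpos]
    · simpa [hpos] using (hz i).lt_of_le (not_lt.mp hpos)⟩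

end ALRNN

/-- For a hyperbolic AL-RNN (no linear-subregion matrix `A + W·D_s` has a
complex eigenvalue of absolute value 1) all of whose fixed points have nonzero last `P`
coordinates, a bounded orbit staying in the union of the open subregions is asymptotically
fixed if and only if its symbolic sequence is eventually constant. -/
theorem stmt0 (M P : ℕ) (hPM : P ≤ M)
    (A W : Matrix (Fin M) (Fin M) ℝ) (h : Fin M → ℝ)
    (hhyp : ∀ s : Fin P → Fin 2,
      ∀ μ ∈ spectrum ℂ (((A + W * signDiag M P s)).map Complex.ofReal),
        ‖μ‖ ≠ 1)
    (hfix : ∀ z : Fin M → ℝ, alrnn M P A W h z = z →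
      ∀ i : Fin P, z ⟨M - P + (i : ℕ), by omega⟩ ≠ 0)
    (z : ℕ → Fin M → ℝ) (horb : ∀ n : ℕ, z (n + 1) = alrnn M P A W h (z n))
    (hbdd : Bornology.IsBounded (Set.range z))
    (a : ℕ → Fin P → Fin 2) (ha : ∀ n : ℕ, z n ∈ regionOpen M P hPM (a n)) :
    (∃ zs : Fin M → ℝ, alrnn M P A W h zs = zs ∧ Tendsto z atTop (𝓝 zs)) ↔
      (∃ N : ℕ, ∃ sstar : Fin P → Fin 2, ∀ n ≥ N, a n = sstar) := by
  constructor
  · rintro ⟨zs, hzs, hlim⟩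
    obtain ⟨s, hs⟩ := exists_mem_regionOpen hPM (hfix zs hzs)
    obtain ⟨N, hN⟩ :=
      eventually_atTop.mp (hlim.eventually ((isOpen_regionOpen hPM s).mem_nhds hs))
    exact ⟨N, s, fun n hn => eq_of_mem_regionOpen (ha n) (hN n hn)⟩
  · rintro ⟨N, s, hs⟩
    have hlin : ∀ k, z (k + 1 + N) = (A + W * signDiag M P s) *ᵥ z (k + N) + h := fun k => by
      rw [add_right_comm, horb,
        alrnn_eq_of_mem_regionOpen A W h (hs (k + N) le_add_self ▸ ha (k + N))]
    obtain ⟨p, hp⟩ := exists_tendsto_of_isBounded_affine_orbit _ (hhyp s) h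
      (z := fun k => z (k + N)) hlin (hbdd.subset (Set.range_comp_subset_range _ z))
    have hzp : Tendsto z atTop (𝓝 p) := (tendsto_add_atTop_iff_nat N).mp hp
    have hiter : ∀ n, z n = (alrnn M P A W h)^[n] (z 0) := fun n => by
      induction n with
      | zero => rfl
      | succ n ih => rw [horb, ih, Function.iterate_succ_apply']
    have hzp_iter : Tendsto (fun n => (alrnn M P A W h)^[n] (z 0)) atTop (𝓝 p) := by
      simpa only [← hiter] using hzp
    exact ⟨p, isFixedPt_of_tendsto_iterate hzp_iter (continuous_alrnn A W h).continuousAt, hzp⟩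
end

section
/- Let F be an AL-RNN and let z_n = F^n(z_0) be an orbit with all z_n ∈ ⋃_s U_s and symbolic sequence a_n. Suppose there is a periodic orbit Γ = {y_1,…,y_p} of F (F(y_k) = y_{k+1 mod p}, the y_k pairwise distinct) such that each y_k lies in some open subregion U_{σ_k} and dist(z_n, Γ) → 0. Then the symbolic sequence is eventually p-periodic: there exists N such that a_{n+p} = a_n for all n ≥ N, and for n ≥ N the sequence (a_n) cycles through the patterns σ_1,…,σ_p in order (up to a cyclic shift). -/
open Matrix Filter Topology

lemma region_isOpen (M P : ℕ) (hPM : P ≤ M) (s : Fin P → Fin 2) :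
    IsOpen (regionOpen M P hPM s) := by
  have hrw : regionOpen M P hPM s = ⋂ i : Fin P, {z : Fin M → ℝ |
      if s i = 1 then 0 < z ⟨M - P + (i : ℕ), by omega⟩
      else z ⟨M - P + (i : ℕ), by omega⟩ < 0} := by
    ext w; simp [regionOpen, Set.mem_iInter]
  rw [hrw]
  refine isOpen_iInter_of_finite fun i => ?_
  by_cases hi : s i = 1
  · simp only [hi, if_pos rfl]
    exact isOpen_lt continuous_const (continuous_apply _)
  · simp only [if_neg hi]
    exact isOpen_lt (continuous_apply _) continuous_const

lemma region_unique (M P : ℕ) (hPM : P ≤ M) (s t : Fin P → Fin 2) (w : Fin M → ℝ)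
    (hs : w ∈ regionOpen M P hPM s) (ht : w ∈ regionOpen M P hPM t) : s = t := by
  funext i
  have h1 := hs i
  have h2 := ht i
  by_cases hsi : s i = 1 <;> by_cases hti : t i = 1
  · rw [hsi, hti]
  · rw [if_pos hsi] at h1; rw [if_neg hti] at h2; linarith
  · rw [if_neg hsi] at h1; rw [if_pos hti] at h2; linarith
  · have hs0 : s i = 0 := by
      have hv := (s i).isLt
      have hv1 : (s i).val ≠ 1 := fun hh => hsi (Fin.ext hh)
      exact Fin.ext (by omega)
    have ht0 : t i = 0 := by
      have hv := (t i).isLt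
      have hv1 : (t i).val ≠ 1 := fun hh => hti (Fin.ext hh)
      exact Fin.ext (by omega)
    rw [hs0, ht0]

lemma alrnn_continuous (M P : ℕ) (A W : Matrix (Fin M) (Fin M) ℝ) (h : Fin M → ℝ) :
    Continuous (alrnn M P A W h) := by
  have hphi : Continuous (phiStar M P) := by
    apply continuous_pi
    intro j
    by_cases hj : (j : ℕ) < M - P
    · simpa [phiStar, hj] using (continuous_apply j)
    · simpa [phiStar, hj] using (continuous_const.max (continuous_apply j))
  have hmv : ∀ (B : Matrix (Fin M) (Fin M) ℝ), Continuous (B.mulVec) := by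
    intro B
    apply continuous_pi
    intro i
    simpa [Matrix.mulVec, dotProduct] using
      (continuous_finset_sum Finset.univ fun j _ =>
        (continuous_const.mul (continuous_apply j) : Continuous fun w : Fin M → ℝ => B i j * w j))
  exact ((hmv A).add ((hmv W).comp hphi)).add continuous_const

theorem stmt3 (M P : ℕ) (hM : 1 ≤ M) (hP : 1 ≤ P) (hPM : P ≤ M)
    (A W : Matrix (Fin M) (Fin M) ℝ) (hA : A.IsDiag) (h : Fin M → ℝ)
    (z : ℕ → Fin M → ℝ) (horb : ∀ n : ℕ, z (n + 1) = alrnn M P A W h (z n))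
    (a : ℕ → Fin P → Fin 2) (ha : ∀ n : ℕ, z n ∈ regionOpen M P hPM (a n))
    (p : ℕ) (hp : 1 ≤ p) (y : Fin p → Fin M → ℝ) (hyinj : Function.Injective y)
    (hcyc : ∀ k : Fin p,
      alrnn M P A W h (y k) = y ⟨((k : ℕ) + 1) % p, Nat.mod_lt _ (by omega)⟩)
    (σ : Fin p → Fin P → Fin 2) (hyreg : ∀ k : Fin p, y k ∈ regionOpen M P hPM (σ k))
    (hconv : Tendsto (fun n => Metric.infDist (z n) (Set.range y)) atTop (𝓝 0)) :
    ∃ N : ℕ, (∀ n ≥ N, a (n + p) = a n) ∧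
      ∃ r : ℕ, ∀ n ≥ N, a n = σ ⟨(n - N + r) % p, Nat.mod_lt _ (by omega)⟩ := by
  classical
  have hppos : 0 < p := hp
  haveI : Nonempty (Fin p) := ⟨⟨0, hppos⟩⟩
  -- ball radii into regions
  have hopen : ∀ k : Fin p, ∃ ε > 0, Metric.ball (y k) ε ⊆ regionOpen M P hPM (σ k) :=
    fun k => Metric.isOpen_iff.1 (region_isOpen M P hPM (σ k)) _ (hyreg k)
  choose εb hεbpos hball using hopen
  -- separation radius
  have hsep : ∃ ε > 0, ∀ j k : Fin p, dist (y j) (y k) < 2 * ε → j = k := by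
    by_cases hp1 : p = 1
    · subst hp1
      exact ⟨1, one_pos, fun j k _ => Subsingleton.elim j k⟩
    · have hp2 : 2 ≤ p := by omega
      set S : Finset ℝ := Finset.univ.offDiag.image (fun q : Fin p × Fin p => dist (y q.1) (y q.2))
        with hS
      have hSne : S.Nonempty := by
        refine ⟨dist (y ⟨0, by omega⟩) (y ⟨1, by omega⟩), ?_⟩
        simp only [hS, Finset.mem_image]
        exact ⟨(⟨0, by omega⟩, ⟨1, by omega⟩), by
          simp [Finset.mem_offDiag, Fin.ext_iff], rfl⟩
      have hminpos : 0 < S.min' hSne := by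
        obtain ⟨q, hq, hqe⟩ := Finset.mem_image.1 (S.min'_mem hSne)
        rw [← hqe]
        have hne : q.1 ≠ q.2 := (Finset.mem_offDiag.1 hq).2.2
        exact dist_pos.2 fun hd => hne (hyinj hd)
      refine ⟨S.min' hSne / 2, by linarith, fun j k hd => ?_⟩
      by_contra hjk
      have hmem : dist (y j) (y k) ∈ S := Finset.mem_image.2
        ⟨(j, k), Finset.mem_offDiag.2 ⟨Finset.mem_univ _, Finset.mem_univ _, hjk⟩, rfl⟩
      have := S.min'_le _ hmem
      linarith
  obtain ⟨εs, hεspos, hsepεs⟩ := hsep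
  -- combined ε
  set ε : ℝ := min εs (Finset.univ.inf' Finset.univ_nonempty εb) with hεdef
  have hεpos : 0 < ε := lt_min hεspos (by
    apply (Finset.lt_inf'_iff _).2
    intro k _
    exact hεbpos k)
  have hεle_b : ∀ k : Fin p, ε ≤ εb k := fun k =>
    le_trans (min_le_right _ _) (Finset.inf'_le _ (Finset.mem_univ k))
  have hεle_s : ε ≤ εs := min_le_left _ _
  -- continuity deltas
  have hcont := alrnn_continuous M P A W h
  have hδex : ∀ k : Fin p, ∃ δ > 0, ∀ w : Fin M → ℝ, dist w (y k) < δ →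
      dist (alrnn M P A W h w) (alrnn M P A W h (y k)) < ε := by
    intro k
    obtain ⟨δ, hδpos, hδ⟩ := Metric.continuousAt_iff.1 (hcont.continuousAt (x := y k)) ε hεpos
    exact ⟨δ, hδpos, fun w hw => hδ hw⟩
  choose δk hδkpos hδk using hδex
  set δ : ℝ := min ε (Finset.univ.inf' Finset.univ_nonempty δk) with hδdef
  have hδpos : 0 < δ := lt_min hεpos (by
    apply (Finset.lt_inf'_iff _).2
    intro k _
    exact hδkpos k)
  have hδle_ε : δ ≤ ε := min_le_left _ _
  have hδle_k : ∀ k : Fin p, δ ≤ δk k := fun k =>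
    le_trans (min_le_right _ _) (Finset.inf'_le _ (Finset.mem_univ k))
  -- eventually close
  have hev : ∀ᶠ n in atTop, Metric.infDist (z n) (Set.range y) < δ :=
    hconv.eventually (Iio_mem_nhds hδpos)
  obtain ⟨N, hN⟩ := eventually_atTop.1 hev
  have hrne : (Set.range y).Nonempty := ⟨y ⟨0, hppos⟩, Set.mem_range_self _⟩
  have hnear : ∀ n ≥ N, ∃ k : Fin p, dist (z n) (y k) < δ := by
    intro n hn
    obtain ⟨w, hw, hd⟩ := (Metric.infDist_lt_iff hrne).1 (hN n hn)
    obtain ⟨k, rfl⟩ := hw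
    exact ⟨k, hd⟩
  obtain ⟨k0, hk0⟩ := hnear N le_rfl
  -- key induction
  have key : ∀ m : ℕ, dist (z (N + m)) (y ⟨((k0 : ℕ) + m) % p, Nat.mod_lt _ hppos⟩) < δ := by
    intro m
    induction m with
    | zero =>
      have he : (⟨((k0 : ℕ) + 0) % p, Nat.mod_lt _ hppos⟩ : Fin p) = k0 :=
        Fin.ext (by simp [Nat.mod_eq_of_lt k0.isLt])
      show dist (z (N + 0)) (y ⟨((k0 : ℕ) + 0) % p, Nat.mod_lt _ hppos⟩) < δ
      rw [he]
      exact hk0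
    | succ m ih =>
      set k : Fin p := ⟨((k0 : ℕ) + m) % p, Nat.mod_lt _ hppos⟩ with hk
      have h1 : dist (z (N + m)) (y k) < δk k := lt_of_lt_of_le ih (hδle_k k)
      have h2 : dist (z (N + m + 1)) (y ⟨((k : ℕ) + 1) % p, Nat.mod_lt _ hppos⟩) < ε := by
        rw [horb (N + m), ← hcyc k]
        exact hδk k _ h1
      obtain ⟨j, hj⟩ := hnear (N + m + 1) (by omega)
      have hjk : j = ⟨((k : ℕ) + 1) % p, Nat.mod_lt _ hppos⟩ := by
        apply hsepεs
        calc dist (y j) (y ⟨((k : ℕ) + 1) % p, Nat.mod_lt _ hppos⟩)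
            ≤ dist (y j) (z (N + m + 1)) + dist (z (N + m + 1)) (y ⟨((k : ℕ) + 1) % p, Nat.mod_lt _ hppos⟩) :=
              dist_triangle _ _ _
          _ < δ + ε := by rw [dist_comm (y j)]; exact add_lt_add hj h2
          _ ≤ 2 * εs := by have := hδle_ε; have := hεle_s; linarith
      rw [hjk] at hj
      have hidx : (⟨((k : ℕ) + 1) % p, Nat.mod_lt _ hppos⟩ : Fin p)
          = ⟨((k0 : ℕ) + (m + 1)) % p, Nat.mod_lt _ hppos⟩ := by
        apply Fin.ext
        show (((k0 : ℕ) + m) % p + 1) % p = ((k0 : ℕ) + (m + 1)) % p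
        rw [Nat.mod_add_mod, Nat.add_assoc]
      rw [hidx] at hj
      simpa [Nat.add_assoc] using hj
  -- symbolic coding
  have hacode : ∀ n ≥ N, a n = σ ⟨((k0 : ℕ) + (n - N)) % p, Nat.mod_lt _ hppos⟩ := by
    intro n hn
    have hzn : dist (z n) (y ⟨((k0 : ℕ) + (n - N)) % p, Nat.mod_lt _ hppos⟩) < δ := by
      have := key (n - N)
      rwa [Nat.add_sub_cancel' hn] at this
    set k : Fin p := ⟨((k0 : ℕ) + (n - N)) % p, Nat.mod_lt _ hppos⟩
    have hmem : z n ∈ regionOpen M P hPM (σ k) := by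
      apply hball k
      exact Metric.mem_ball.2 (lt_of_lt_of_le hzn (le_trans hδle_ε (hεle_b k)))
    exact region_unique M P hPM (a n) (σ k) (z n) (ha n) hmem
  refine ⟨N, ?_, (k0 : ℕ), ?_⟩
  · intro n hn
    rw [hacode n hn, hacode (n + p) (by omega)]
    have he : (⟨((k0 : ℕ) + (n + p - N)) % p, Nat.mod_lt _ hppos⟩ : Fin p)
        = ⟨((k0 : ℕ) + (n - N)) % p, Nat.mod_lt _ hppos⟩ := by
      apply Fin.ext
      show ((k0 : ℕ) + (n + p - N)) % p = ((k0 : ℕ) + (n - N)) % p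
      have hnn : n + p - N = (n - N) + p := by omega
      rw [hnn, ← Nat.add_assoc, Nat.add_mod_right]
    rw [he]
  · intro n hn
    rw [hacode n hn]
    have he : (⟨((k0 : ℕ) + (n - N)) % p, Nat.mod_lt _ hppos⟩ : Fin p)
        = ⟨(n - N + (k0 : ℕ)) % p, Nat.mod_lt _ hppos⟩ := by
      apply Fin.ext
      show ((k0 : ℕ) + (n - N)) % p = (n - N + (k0 : ℕ)) % p
      rw [Nat.add_comm]
    rw [he]
end

section
/- Let M be a real n×n matrix such that, viewed as a complex matrix, M has no eigenvalue of absolute value 1, let h ∈ ℝ^n, and define the orbit z_{n+1} = M z_n + h from an initial point z_0. If the orbit (z_n) is bounded, then it converges to the unique fixed point z* = (I − M)⁻¹ h of the affine map z ↦ M z + h. -/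
/-
Subtracting the fixed point `p = (1 - M)⁻¹ h`, which exists because `1` is not an eigenvalue,
turns the orbit into `z k - p = M ^ k (z 0 - p)`, so it suffices to show that a bounded orbit of
the linear map `M` tends to `0`. Over `ℂ` the space is the sum of the generalized eigenspaces for
eigenvalues inside and outside the unit circle. On the first, `M` has spectral radius `< 1`, so
its powers tend to `0` in operator norm by Gelfand's formula. On the second, `M` is invertible
and `M⁻¹` has spectral radius `< 1`, so `x = M⁻ᵏ (Mᵏ x)` forces a bounded orbit to vanish.
-/

open Matrix Filter Topology

section BanachAlgebra

variable {A : Type*} [NormedRing A] [NormedAlgebra ℂ A] [CompleteSpace A]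

theorem tendsto_norm_pow_of_spectralRadius_lt_one (a : A) (ha : spectralRadius ℂ a < 1) :
    Tendsto (fun k : ℕ => ‖a ^ k‖) atTop (𝓝 0) := by
  obtain ⟨r, hr0, har, hr1⟩ := ENNReal.lt_iff_exists_real_btwn.mp ha
  have hr1 : r < 1 := by simpa using (ENNReal.ofReal_lt_one).mp hr1
  have hgelfand := spectrum.pow_norm_pow_one_div_tendsto_nhds_spectralRadius a
  have hbound : ∀ᶠ k : ℕ in atTop, ‖a ^ k‖ ≤ r ^ k := by
    filter_upwards [hgelfand.eventually_lt_const har, eventually_gt_atTop 0] with k hk hk0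
    have hroot : ‖a ^ k‖ ^ (1 / k : ℝ) < r :=
      (ENNReal.ofReal_lt_ofReal_iff_of_nonneg (by positivity)).mp hk
    calc ‖a ^ k‖ = (‖a ^ k‖ ^ (1 / k : ℝ)) ^ k := by
          rw [← Real.rpow_mul_natCast (norm_nonneg _), one_div, inv_mul_cancel₀ (by positivity),
            Real.rpow_one]
      _ ≤ r ^ k := pow_le_pow_left₀ (by positivity) hroot.le k
  exact squeeze_zero' (.of_forall fun _ => norm_nonneg _) hbound
    (tendsto_pow_atTop_nhds_zero_of_lt_one hr0 hr1)

theorem tendsto_norm_pow_of_forall_mem_spectrum_norm_lt_one (a : A)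
    (ha : ∀ μ ∈ spectrum ℂ a, ‖μ‖ < 1) : Tendsto (fun k : ℕ => ‖a ^ k‖) atTop (𝓝 0) := by
  cases subsingleton_or_nontrivial A
  · simp [Subsingleton.elim (a ^ _) 0]
  refine tendsto_norm_pow_of_spectralRadius_lt_one a ?_
  simpa using spectrum.spectralRadius_lt_of_forall_lt a (r := 1) fun μ hμ => by
    simpa [← NNReal.coe_lt_coe] using ha μ hμ

end BanachAlgebra

namespace Module.End

variable {K V : Type*} [Field K] [AddCommGroup V] [Module K V]

def spectralSubspace (f : End K V) (s : Set K) : Submodule K V :=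
  ⨆ μ ∈ s, f.maxGenEigenspace μ

theorem mapsTo_spectralSubspace (f : End K V) (s : Set K) :
    ∀ x ∈ f.spectralSubspace s, f x ∈ f.spectralSubspace s := by
  suffices f.spectralSubspace s ≤ (f.spectralSubspace s).comap f from fun x hx => this hx
  refine iSup₂_le fun μ hμ x hx => ?_
  exact (le_biSup f.maxGenEigenspace hμ) (f.mapsTo_maxGenEigenspace_of_comm (Commute.refl f) μ hx)

theorem spectralSubspace_sup_compl [IsAlgClosed K] [FiniteDimensional K V] (f : End K V)
    (s : Set K) : f.spectralSubspace s ⊔ f.spectralSubspace sᶜ = ⊤ := by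
  rw [spectralSubspace, spectralSubspace, ← iSup_union, Set.union_compl_self, iSup_univ]
  exact f.iSup_maxGenEigenspace_eq_top

theorem mem_of_mem_spectrum_restrict_spectralSubspace [FiniteDimensional K V] (f : End K V)
    {s : Set K} {μ : K} (hμ : μ ∈ spectrum K (f.restrict (f.mapsTo_spectralSubspace s))) :
    μ ∈ s ∧ μ ∈ spectrum K f := by
  have hdisj : ¬ Disjoint (f.eigenspace μ) (f.spectralSubspace s) := fun h =>
    hasEigenvalue_iff_mem_spectrum.mpr hμ (eigenspace_restrict_eq_bot _ h)
  refine ⟨?_, hasEigenvalue_iff_mem_spectrum.mp fun h => hdisj (by simp [h])⟩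
  by_contra hμs
  exact hdisj ((f.independent_maxGenEigenspace.disjoint_biSup hμs).mono_left
    eigenspace_le_maxGenEigenspace)

variable {E : Type*} [NormedAddCommGroup E] [NormedSpace ℂ E] [FiniteDimensional ℂ E]

theorem tendsto_norm_toContinuousLinearMap_pow (g : End ℂ E)
    (hg : ∀ μ ∈ spectrum ℂ g, ‖μ‖ < 1) :
    Tendsto (fun k : ℕ => ‖toContinuousLinearMap E (g ^ k)‖) atTop (𝓝 0) := by
  simp_rw [map_pow]
  exact tendsto_norm_pow_of_forall_mem_spectrum_norm_lt_one _ <| by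
    rwa [AlgEquiv.spectrum_eq]

theorem tendsto_pow_apply_of_forall_mem_spectrum_norm_lt_one (g : End ℂ E)
    (hg : ∀ μ ∈ spectrum ℂ g, ‖μ‖ < 1) (x : E) :
    Tendsto (fun k : ℕ => (g ^ k) x) atTop (𝓝 0) := by
  rw [tendsto_zero_iff_norm_tendsto_zero]
  refine squeeze_zero (fun _ => norm_nonneg _) (fun k => ?_)
    (by simpa only [zero_mul] using (g.tendsto_norm_toContinuousLinearMap_pow hg).mul_const ‖x‖)
  exact (toContinuousLinearMap E (g ^ k)).le_opNorm x

theorem eq_zero_of_isBounded_range_pow_apply (g : End ℂ E) (hg : ∀ μ ∈ spectrum ℂ g, 1 < ‖μ‖)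
    {x : E} (hx : Bornology.IsBounded (Set.range fun k : ℕ => (g ^ k) x)) : x = 0 := by
  obtain ⟨C, hC⟩ := isBounded_iff_forall_norm_le.mp hx
  obtain ⟨u, rfl⟩ : IsUnit g := (spectrum.zero_notMem_iff ℂ).mp fun h0 =>
    (hg 0 h0).not_ge (by simp)
  have hinv : ∀ μ ∈ spectrum ℂ (↑u⁻¹ : End ℂ E), ‖μ‖ < 1 := by
    intro μ hμ
    rw [← spectrum.map_inv, Set.mem_inv] at hμ
    exact (one_lt_inv_iff₀.mp (by simpa using hg _ hμ)).2
  have hle : ∀ k : ℕ, ‖x‖ ≤ ‖toContinuousLinearMap E ((↑u⁻¹ : End ℂ E) ^ k)‖ * C := fun k =>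
    calc ‖x‖ = ‖toContinuousLinearMap E ((↑u⁻¹ : End ℂ E) ^ k) (((u : End ℂ E) ^ k) x)‖ := by
          change _ = ‖((↑u⁻¹ : End ℂ E) ^ k) (((u : End ℂ E) ^ k) x)‖
          rw [← Units.val_pow_eq_pow_val, ← Units.val_pow_eq_pow_val,
            ← mul_apply, ← Units.val_mul, inv_pow, inv_mul_cancel, Units.val_one, one_apply]
      _ ≤ _ := (ContinuousLinearMap.le_opNorm _ _).trans
          (mul_le_mul_of_nonneg_left (hC _ ⟨k, rfl⟩) (norm_nonneg _))
  have hx0 : ‖x‖ ≤ 0 := ge_of_tendsto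
    (by simpa using (tendsto_norm_toContinuousLinearMap_pow _ hinv).mul_const C) (.of_forall hle)
  exact norm_le_zero_iff.mp hx0

theorem tendsto_pow_apply_of_isBounded_range (f : End ℂ E) (hf : ∀ μ ∈ spectrum ℂ f, ‖μ‖ ≠ 1)
    {x : E} (hx : Bornology.IsBounded (Set.range fun k : ℕ => (f ^ k) x)) :
    Tendsto (fun k : ℕ => (f ^ k) x) atTop (𝓝 0) := by
  set s : Set ℂ := {μ | ‖μ‖ < 1}
  have hpow (t : Set ℂ) (k : ℕ) (y : f.spectralSubspace t) :
      ((f.restrict (f.mapsTo_spectralSubspace t) ^ k) y : E) = (f ^ k) y := by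
    rw [pow_restrict, LinearMap.coe_restrict_apply]
  obtain ⟨y, hy, w, hw, rfl⟩ := Submodule.mem_sup.mp
    ((f.spectralSubspace_sup_compl s).symm ▸ Submodule.mem_top : x ∈ _)
  have hy0 : Tendsto (fun k : ℕ => (f ^ k) y) atTop (𝓝 0) :=
    ((continuous_subtype_val.tendsto 0).comp (tendsto_pow_apply_of_forall_mem_spectrum_norm_lt_one _
      (fun μ hμ => (mem_of_mem_spectrum_restrict_spectralSubspace f hμ).1) ⟨y, hy⟩)).congr
      (hpow s · ⟨y, hy⟩)
  have hw0 : (⟨w, hw⟩ : f.spectralSubspace sᶜ) = 0 := by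
    refine eq_zero_of_isBounded_range_pow_apply (f.restrict (f.mapsTo_spectralSubspace sᶜ))
      (fun μ hμ => ?_) ?_
    · obtain ⟨hμs, hμf⟩ := mem_of_mem_spectrum_restrict_spectralSubspace f hμ
      exact lt_of_le_of_ne (not_lt.mp hμs) (hf μ hμf).symm
    · rw [← Bornology.isBounded_image_subtype_val, ← Set.range_comp]
      refine (hx.sub (Metric.isBounded_range_of_tendsto _ hy0)).subset ?_
      rintro _ ⟨k, rfl⟩
      refine ⟨_, ⟨k, rfl⟩, _, ⟨k, rfl⟩, ?_⟩
      simp only [Function.comp_apply, hpow, map_add, add_sub_cancel_left]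
  rwa [show w = 0 from congrArg Subtype.val hw0, add_zero]

end Module.End

namespace Matrix

variable {ι : Type*} [Fintype ι] [DecidableEq ι]

theorem isUnit_one_sub_of_one_notMem_spectrum_map (M : Matrix ι ι ℝ)
    (h1 : (1 : ℂ) ∉ spectrum ℂ (M.map Complex.ofReal)) : IsUnit (1 - M) := by
  have hC : IsUnit (Complex.ofRealHom.mapMatrix (1 - M)) := by
    rw [map_sub, map_one]
    exact (by simpa using spectrum.notMem_iff.mp h1 : IsUnit (1 - M.map Complex.ofReal))
  rw [isUnit_iff_isUnit_det] at hC ⊢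
  rw [← RingHom.map_det, isUnit_iff_ne_zero] at *
  exact fun h0 => hC (by simp [h0])

theorem isFixedPt_nonsing_inv_one_sub_mulVec {R : Type*} [CommRing R] {M : Matrix ι ι R}
    (hM : IsUnit (1 - M)) (h : ι → R) :
    Function.IsFixedPt (fun w => M *ᵥ w + h) ((1 - M)⁻¹ *ᵥ h) := by
  have hinv : (1 - M) *ᵥ ((1 - M)⁻¹ *ᵥ h) = h := by
    rw [mulVec_mulVec, mul_nonsing_inv _ ((isUnit_iff_isUnit_det _).mp hM), one_mulVec]
  rw [sub_mulVec, one_mulVec] at hinv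
  rw [Function.IsFixedPt]
  nth_rw 2 [← hinv]
  abel

theorem sub_eq_pow_mulVec_of_isFixedPt {R : Type*} [Ring R] {M : Matrix ι ι R} {h p : ι → R}
    {z : ℕ → ι → R} (hz : ∀ k, z (k + 1) = M *ᵥ z k + h)
    (hp : Function.IsFixedPt (fun w => M *ᵥ w + h) p) (k : ℕ) :
    z k - p = (M ^ k) *ᵥ (z 0 - p) := by
  induction k with
  | zero => simp
  | succ k ih =>
    conv_lhs => rw [hz, ← hp]
    rw [add_sub_add_right_eq_sub, ← mulVec_sub, ih, mulVec_mulVec, pow_succ']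

theorem tendsto_pow_mulVec_of_isBounded_range (M : Matrix ι ι ℝ)
    (hM : ∀ μ ∈ spectrum ℂ (M.map Complex.ofReal), ‖μ‖ ≠ 1) {v : ι → ℝ}
    (hv : Bornology.IsBounded (Set.range fun k : ℕ => (M ^ k) *ᵥ v)) :
    Tendsto (fun k : ℕ => (M ^ k) *ᵥ v) atTop (𝓝 0) := by
  set c : (ι → ℝ) → ι → ℂ := Pi.map fun _ => Complex.ofReal
  have hc : Isometry c := .piMap _ fun _ => Complex.isometry_ofReal
  have hcomm (k : ℕ) : c ((M ^ k) *ᵥ v) = (toLin' (M.map Complex.ofReal) ^ k) (c v) := by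
    rw [← toLin'_pow, toLin'_apply]
    ext i
    rw [show M.map Complex.ofReal ^ k = (M ^ k).map Complex.ofRealHom from
      (map_pow Complex.ofRealHom.mapMatrix M k).symm]
    exact RingHom.map_mulVec Complex.ofRealHom _ _ i
  have hc0 : c 0 = 0 := funext fun _ => Complex.ofReal_zero
  rw [hc.isEmbedding.tendsto_nhds_iff, hc0, Function.comp_def]
  simp only [hcomm]
  refine Module.End.tendsto_pow_apply_of_isBounded_range _ (by rwa [spectrum_toLin']) ?_
  simpa only [← hcomm, Set.range_comp'] using hc.lipschitz.isBounded_image hv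

end Matrix

/-- Let `Mat` be a real `n×n` matrix with no complex eigenvalue of
absolute value 1, and let `z` be an orbit of the affine map `w ↦ Mat w + h`. If the orbit
is bounded, then it converges to the unique fixed point `(I - Mat)⁻¹ h`. -/
theorem stmt9 (n : ℕ) (Mat : Matrix (Fin n) (Fin n) ℝ) (h : Fin n → ℝ)
    (hspec : ∀ μ ∈ spectrum ℂ (Mat.map Complex.ofReal), ‖μ‖ ≠ 1)
    (z : ℕ → Fin n → ℝ) (horb : ∀ k : ℕ, z (k + 1) = Mat.mulVec (z k) + h)
    (hbdd : Bornology.IsBounded (Set.range z)) :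
    Tendsto z atTop (𝓝 ((1 - Mat)⁻¹.mulVec h)) := by
  have hunit := Mat.isUnit_one_sub_of_one_notMem_spectrum_map fun h1 => hspec 1 h1 (by simp)
  have hdiff := sub_eq_pow_mulVec_of_isFixedPt horb (isFixedPt_nonsing_inv_one_sub_mulVec hunit h)
  refine tendsto_sub_nhds_zero_iff.mp <|
    (Mat.tendsto_pow_mulVec_of_isBounded_range hspec ?_).congr fun k => (hdiff k).symm
  rw [← funext hdiff]
  exact (hbdd.sub Bornology.isBounded_singleton).subset
    (Set.range_subset_iff.mpr fun k => Set.sub_mem_sub (Set.mem_range_self k) rfl)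
end
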